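/- arXiv:1110.3188 — 7 statements merged into one kernel-verified Lean document; each statement's English description precedes it below -/
import Mathlib

section
/- Let n be a nonzero integer and define Q : (0,∞) × ℝ → ℂ by Q(r,θ) := ( (Θ_o/(Θ_o + R^{2n}·Θ̄_o))·r^{n} + (Θ̄_o/(Θ̄_o + R^{−2n}·Θ_o))·r^{−n} ) · e^{i n θ}. Then Q satisfies the Laplace equation in polar coordinates, ∂_r( r·∂_r Q(r,θ) ) + (1/r)·∂²_θ Q(r,θ) = 0 for all r > 0 and θ ∈ ℝ; moreover Q(1,θ) = e^{i n θ} for all θ, and Q satisfies the boundary condition α_o·∂_r Q(R,θ) − (β_o/R)·∂_θ Q(R,θ) = 0 for all θ ∈ ℝ. -/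
/-!
Separation of variables: `Q(r, θ) = f(r) e^{inθ}` with `f(r) = A rⁿ + B r⁻ⁿ`, and `f` solves
the Euler equation `r (r f')' = n² f`, which cancels the angular term
`∂²_θ e^{inθ} = -n² e^{inθ}`. The boundary condition at `R` reduces to `Θ̄ A Rⁿ = Θ B R⁻ⁿ`;
this and the trace condition `A + B = 1` are exactly what the choice of `A` and `B` achieves.
-/

open Complex ComplexConjugate Filter Topology

theorem hasDerivAt_exp_I_mul (c : ℂ) (t : ℝ) :
    HasDerivAt (fun s : ℝ => exp (I * c * s)) (I * c * exp (I * c * t)) t := by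
  simpa [mul_comm] using ((hasDerivAt_id (t : ℂ)).const_mul (I * c)).cexp.comp_ofReal

theorem deriv_deriv_exp_I_mul (c : ℂ) (θ : ℝ) :
    deriv (deriv fun t : ℝ => exp (I * c * t)) θ = -c ^ 2 * exp (I * c * θ) := by
  have hderiv : (deriv fun t : ℝ => exp (I * c * t)) = fun t : ℝ => I * c * exp (I * c * t) :=
    funext fun t => (hasDerivAt_exp_I_mul c t).deriv
  rw [hderiv, ((hasDerivAt_exp_I_mul c θ).const_mul (I * c)).deriv]
  linear_combination c ^ 2 * exp (I * c * θ) * I_mul_I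

noncomputable def radialMode (A B : ℂ) (n : ℤ) (r : ℝ) : ℂ :=
  A * (r : ℂ) ^ n + B * (r : ℂ) ^ (-n)

theorem hasDerivAt_radialMode (A B : ℂ) (n : ℤ) {r : ℝ} (hr : r ≠ 0) :
    HasDerivAt (radialMode A B n) (n * (A * (r : ℂ) ^ n - B * (r : ℂ) ^ (-n)) / r) r := by
  have hr' : (r : ℂ) ≠ 0 := by exact_mod_cast hr
  have h : HasDerivAt (radialMode A B n) _ r :=
    (((hasDerivAt_zpow n (r : ℂ) (.inl hr')).comp_ofReal).const_mul A).add
      (((hasDerivAt_zpow (-n) (r : ℂ) (.inl hr')).comp_ofReal).const_mul B)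
  refine h.congr_deriv ?_
  rw [zpow_sub_one₀ hr', zpow_sub_one₀ hr']
  push_cast
  ring

theorem deriv_mul_deriv_radialMode (A B : ℂ) (n : ℤ) {r : ℝ} (hr : r ≠ 0) :
    deriv (fun s : ℝ => (s : ℂ) * deriv (radialMode A B n) s) r
      = n ^ 2 * radialMode A B n r / r := by
  have heq : (fun s : ℝ => (s : ℂ) * deriv (radialMode A B n) s)
      =ᶠ[𝓝 r] radialMode (n * A) (-(n * B)) n := by
    filter_upwards [eventually_ne_nhds hr] with s hs
    have hs' : (s : ℂ) ≠ 0 := by exact_mod_cast hs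
    rw [(hasDerivAt_radialMode A B n hs).deriv, radialMode]
    field_simp
    ring
  rw [heq.deriv_eq, (hasDerivAt_radialMode _ _ n hr).deriv, radialMode]
  ring

theorem polarLaplacian_radialMode_mul_exp (A B : ℂ) (n : ℤ) {r : ℝ} (hr : r ≠ 0) (θ : ℝ) :
    deriv (fun s : ℝ => (s : ℂ) *
        deriv (fun u : ℝ => radialMode A B n u * exp (I * n * θ)) s) r
      + 1 / (r : ℂ) * deriv (deriv fun t : ℝ => radialMode A B n r * exp (I * n * t)) θ
      = 0 := by
  simp only [deriv_mul_const_field', deriv_const_mul_field', ← mul_assoc]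
  rw [deriv_mul_deriv_radialMode A B n hr, deriv_deriv_exp_I_mul]
  field_simp
  ring

theorem obliqueDeriv_radialMode_mul_exp {α β R : ℝ} (hR : R ≠ 0) {A B : ℂ} {n : ℤ}
    (hAB : (α - β * I) * A * (R : ℂ) ^ n = (α + β * I) * B * (R : ℂ) ^ (-n)) (θ : ℝ) :
    α * deriv (fun u : ℝ => radialMode A B n u * exp (I * n * θ)) R
      - ((β / R : ℝ) : ℂ) * deriv (fun t : ℝ => radialMode A B n R * exp (I * n * t)) θ
      = 0 := by
  simp only [deriv_mul_const_field', deriv_const_mul_field']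
  rw [(hasDerivAt_radialMode A B n hR).deriv, (hasDerivAt_exp_I_mul _ θ).deriv, radialMode]
  push_cast
  linear_combination n * exp (I * n * θ) / R * hAB

theorem add_ofReal_mul_conj_ne_zero {Θ : ℂ} (hΘ : 0 < Θ.re) {x : ℝ} (hx : 0 ≤ x) :
    Θ + x * conj Θ ≠ 0 := by
  intro h
  have hre := congrArg re h
  simp only [add_re, re_ofReal_mul, conj_re, zero_re] at hre
  nlinarith

theorem conj_div_conj_add_inv_mul (Θ : ℂ) {x : ℂ} (hx : x ≠ 0) :
    conj Θ / (conj Θ + x⁻¹ * Θ) = x * conj Θ / (Θ + x * conj Θ) := by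
  have hden : conj Θ + x⁻¹ * Θ = (Θ + x * conj Θ) / x := by
    field_simp
    ring
  rw [hden, div_div_eq_mul_div, mul_comm]

theorem div_add_conj_div_eq_one {Θ : ℂ} (hΘ : 0 < Θ.re) {x : ℝ} (hx : 0 < x) :
    Θ / (Θ + x * conj Θ) + conj Θ / (conj Θ + (x : ℂ)⁻¹ * Θ) = 1 := by
  rw [conj_div_conj_add_inv_mul Θ (ofReal_ne_zero.2 hx.ne'), ← add_div,
    div_self (add_ofReal_mul_conj_ne_zero hΘ hx.le)]

theorem conj_mul_div_mul_eq (Θ : ℂ) {x : ℂ} (hx : x ≠ 0) :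
    conj Θ * (Θ / (Θ + x * conj Θ)) * x = Θ * (conj Θ / (conj Θ + x⁻¹ * Θ)) := by
  rw [conj_div_conj_add_inv_mul Θ hx]
  ring

theorem statement1_general (αo βo R : ℝ) (hαo : 0 < αo) (hR : 2 ≤ R)
    (Θo : ℂ) (hΘo : Θo = (αo : ℂ) + (βo : ℂ) * I)
    (n : ℤ)
    (Q : ℝ → ℝ → ℂ)
    (hQ : ∀ r θ : ℝ, Q r θ =
      (Θo / (Θo + ((R ^ (2 * n) : ℝ) : ℂ) * (starRingEnd ℂ) Θo) * (r : ℂ) ^ n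
        + (starRingEnd ℂ) Θo / ((starRingEnd ℂ) Θo + ((R ^ (-(2 * n)) : ℝ) : ℂ) * Θo)
            * (r : ℂ) ^ (-n))
        * Complex.exp (I * (n : ℂ) * (θ : ℂ))) :
    (∀ r θ : ℝ, 0 < r →
      deriv (fun s : ℝ => (s : ℂ) * deriv (fun u : ℝ => Q u θ) s) r
        + (1 / (r : ℂ)) * deriv (deriv (fun t : ℝ => Q r t)) θ = 0)
    ∧ (∀ θ : ℝ, Q 1 θ = Complex.exp (I * (n : ℂ) * (θ : ℂ)))
    ∧ ∀ θ : ℝ,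
      (αo : ℂ) * deriv (fun u : ℝ => Q u θ) R
        - ((βo / R : ℝ) : ℂ) * deriv (fun t : ℝ => Q R t) θ = 0 := by
  have hR0 : 0 < R := by linarith
  have hΘre : 0 < Θo.re := by simpa [hΘo] using hαo
  have hx : 0 < R ^ (2 * n) := zpow_pos hR0 _
  rw [zpow_neg, ofReal_inv] at hQ
  set A := Θo / (Θo + ((R ^ (2 * n) : ℝ) : ℂ) * conj Θo)
  set B := conj Θo / (conj Θo + ((R ^ (2 * n) : ℝ) : ℂ)⁻¹ * Θo)
  obtain rfl : Q = fun r (θ : ℝ) => radialMode A B n r * exp (I * n * θ) := funext₂ hQ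
  refine ⟨fun r θ hr => polarLaplacian_radialMode_mul_exp A B n hr.ne' θ, fun θ => ?_,
    obliqueDeriv_radialMode_mul_exp hR0.ne' ?_⟩
  · have hAB : A + B = 1 := div_add_conj_div_eq_one hΘre hx
    simp [radialMode, hAB]
  · have hconj : conj Θo = αo - βo * I := by simp [hΘo, sub_eq_add_neg]
    have hRn : (R : ℂ) ^ n = ((R ^ (2 * n) : ℝ) : ℂ) * (R : ℂ) ^ (-n) := by
      push_cast
      rw [← zpow_add₀ (by exact_mod_cast hR0.ne')]
      ring_nf
    rw [← hΘo, ← hconj, hRn, ← mul_assoc, conj_mul_div_mul_eq Θo (ofReal_ne_zero.2 hx.ne')]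

/-- The Fourier-mode solution of the outer (annulus) problem at `ρ = 0`:
`Q(r,θ) = ((Θ_o/(Θ_o + R^{2n}·Θ̄_o))·rⁿ + (Θ̄_o/(Θ̄_o + R^{−2n}·Θ_o))·r^{−n})·e^{inθ}`
satisfies the Laplace equation in polar coordinates, has trace `e^{inθ}` on the unit
circle, and satisfies the outer boundary condition
`α_o·∂_r Q(R,θ) − (β_o/R)·∂_θ Q(R,θ) = 0`. -/
theorem statement1 (αo βo R : ℝ) (hαo : 0 < αo) (hβo : 0 ≤ βo) (hR : 2 ≤ R)
    (Θo : ℂ) (hΘo : Θo = (αo : ℂ) + (βo : ℂ) * I)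
    (n : ℤ) (hn : n ≠ 0)
    (Q : ℝ → ℝ → ℂ)
    (hQ : ∀ r θ : ℝ, Q r θ =
      (Θo / (Θo + ((R ^ (2 * n) : ℝ) : ℂ) * (starRingEnd ℂ) Θo) * (r : ℂ) ^ n
        + (starRingEnd ℂ) Θo / ((starRingEnd ℂ) Θo + ((R ^ (-(2 * n)) : ℝ) : ℂ) * Θo)
            * (r : ℂ) ^ (-n))
        * Complex.exp (I * (n : ℂ) * (θ : ℂ))) :
    (∀ r θ : ℝ, 0 < r →
      deriv (fun s : ℝ => (s : ℂ) * deriv (fun u : ℝ => Q u θ) s) r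
        + (1 / (r : ℂ)) * deriv (deriv (fun t : ℝ => Q r t)) θ = 0)
    ∧ (∀ θ : ℝ, Q 1 θ = Complex.exp (I * (n : ℂ) * (θ : ℂ)))
    ∧ ∀ θ : ℝ,
      (αo : ℂ) * deriv (fun u : ℝ => Q u θ) R
        - ((βo / R : ℝ) : ℂ) * deriv (fun t : ℝ => Q R t) θ = 0 :=
  statement1_general αo βo R hαo hR Θo hΘo n Q hQ
end

section
/- For every nonzero integer n one has l_n ≠ 1. -/
open Complex Filter

/-- `Θ_i = α_i + i·β_i`. -/
noncomputable def Thi (αi βi : ℝ) : ℂ := (αi : ℂ) + (βi : ℂ) * Complex.I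

/-- `Θ_o = α_o + i·β_o`. -/
noncomputable def Tho (αo βo : ℝ) : ℂ := (αo : ℂ) + (βo : ℂ) * Complex.I

/-- The multiplier `l_n` of equation (36A):
`l_n = (1 − R^{2n})·|Θ_i|² / ((sign(n)·α_i − i·β_i)·(Θ_o + R^{2n}·Θ̄_o))`. -/
noncomputable def lseq (αi αo βi βo R : ℝ) (n : ℤ) : ℂ :=
  (((1 - R ^ (2 * n)) * ‖Thi αi βi‖ ^ 2 : ℝ) : ℂ) /
    (((n.sign : ℂ) * (αi : ℂ) - (βi : ℂ) * Complex.I) *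
      (Tho αo βo + ((R ^ (2 * n) : ℝ) : ℂ) * (starRingEnd ℂ) (Tho αo βo)))

/-! Write `s = sign n`, `t = R^{2n}` and `z = s·α_i − i·β_i`. Since `s² = 1`, `|Θ_i|² = z·z̄`, so
`l_n = 1` cancels to `(1 − t)·z̄ = Θ_o + t·Θ̄_o`. Comparing real parts gives
`s·(1 − t)·α_i = (1 + t)·α_o`, where the right side is positive, while `s·(1 − t) < 0` because `R > 1`
makes `t > 1` exactly when `n > 0`. -/

lemma eq_of_div_eq_one₀ {K : Type*} [GroupWithZero K] {a b : K} (h : a / b = 1) : a = b := by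
  rcases eq_or_ne b 0 with rfl | hb
  · simp at h
  · exact (div_eq_one_iff_eq hb).mp h

lemma Int.sq_sign_eq_one {m : ℤ} (hm : m ≠ 0) : (m.sign : ℝ) ^ 2 = 1 := by
  rcases hm.lt_or_gt with hneg | hpos
  · simp [Int.sign_eq_neg_one_of_neg hneg]
  · simp [Int.sign_eq_one_of_pos hpos]

lemma Int.sign_mul_one_sub_zpow_neg {R : ℝ} (hR : 1 < R) {m : ℤ} (hm : m ≠ 0) :
    (m.sign : ℝ) * (1 - R ^ m) < 0 := by
  rcases hm.lt_or_gt with hneg | hpos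
  · have := zpow_lt_one_of_neg₀ hR hneg
    rw [Int.sign_eq_neg_one_of_neg hneg]
    push_cast
    linarith
  · have := one_lt_zpow₀ hR hpos
    rw [Int.sign_eq_one_of_pos hpos]
    push_cast
    linarith

lemma re_eq_of_mul_normSq_eq_mul {s a b t : ℝ} {w : ℂ} (hs : s ^ 2 = 1) (ha : a ≠ 0)
    (h : (((1 - t) * (a ^ 2 + b ^ 2) : ℝ) : ℂ) = (s * a - b * I) * w) :
    w.re = (1 - t) * s * a := by
  set z : ℂ := s * a - b * I
  have hs0 : s ≠ 0 := by
    rintro rfl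
    norm_num at hs
  have hz : z ≠ 0 := fun h0 => mul_ne_zero hs0 ha (by simpa [z] using congrArg re h0)
  have hnorm : normSq z = a ^ 2 + b ^ 2 := by
    simp [z, normSq_apply, ← sq, mul_pow, hs]
  have hzz : (((1 - t) * (a ^ 2 + b ^ 2) : ℝ) : ℂ) = z * ((1 - t) * starRingEnd ℂ z) := by
    rw [mul_left_comm, mul_conj, hnorm]
    push_cast
    ring
  rw [hzz, mul_right_inj' hz] at h
  simp [← h, z, mul_assoc]

lemma norm_Thi_sq (a b : ℝ) : ‖Thi a b‖ ^ 2 = a ^ 2 + b ^ 2 := by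
  rw [Complex.sq_norm, Thi, normSq_add_mul_I]

lemma re_Tho_add_mul_conj (a b t : ℝ) :
    (Tho a b + t * starRingEnd ℂ (Tho a b)).re = (1 + t) * a := by
  simp [Tho, add_mul]

theorem statement3_general (αi αo βi βo R : ℝ)
    (hαi : 0 < αi) (hαo : 0 < αo) (hR : 2 ≤ R) :
    ∀ n : ℤ, n ≠ 0 → lseq αi αo βi βo R n ≠ 1 := by
  intro n hn h
  rw [lseq, norm_Thi_sq] at h
  set t : ℝ := R ^ (2 * n)
  have hre := re_eq_of_mul_normSq_eq_mul (Int.sq_sign_eq_one hn) hαi.ne' (eq_of_div_eq_one₀ h)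
  rw [re_Tho_add_mul_conj] at hre
  have hsign : (n.sign : ℝ) * (1 - t) < 0 := by
    have h2 : Int.sign 2 = 1 := rfl
    simpa [Int.sign_mul, h2] using
      Int.sign_mul_one_sub_zpow_neg (by linarith : (1 : ℝ) < R) (mul_ne_zero two_ne_zero hn)
  have hlhs : 0 < (1 + t) * αo := mul_pos (by positivity) hαo
  have hrhs : (1 - t) * n.sign * αi < 0 := by
    rw [mul_comm (1 - t)]
    exact mul_neg_of_neg_of_pos hsign hαi
  linarith

/-- For every nonzero integer `n` one has `l_n ≠ 1`. -/
theorem statement3 (αi αo βi βo R : ℝ)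
    (hαi : 0 < αi) (hαo : 0 < αo) (hβi : 0 ≤ βi) (hβo : 0 ≤ βo) (hR : 2 ≤ R) :
    ∀ n : ℤ, n ≠ 0 → lseq αi αo βi βo R n ≠ 1 :=
  statement3_general αi αo βi βo R hαi hαo hR
end

section
/- With M_n := (1 − l_n)^{−1} for nonzero integers n, one has sup_{n ∈ ℤ \ {0}} |M_n| < ∞; equivalently, the quantities |1 − l_n| are bounded away from zero uniformly in n. -/
open Complex Filter

/-!
Write `d = sign(n)·α_i − i·β_i`, `t = R^{2n}` and `E = Θ_o + t·Θ̄_o`. Since `|d| = |Θ_i|`, the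
numerator of `l_n` is `(1 − t)·d·d̄`, so `1 − l_n = (E − (1 − t)·d̄) / E`. Now `Re E = (1 + t)·α_o`
and `(1 − t)·Re d̄ = (1 − t)·sign(n)·α_i ≤ 0`, because `t ≥ 1` exactly when `n > 0`; hence the
numerator has real part at least `(1 + t)·α_o`, while `|E| ≤ (1 + t)·|Θ_o|`. Therefore
`|1 − l_n| ≥ α_o / |Θ_o|` for every `n ≠ 0`.
-/

lemma one_sub_zpow_mul_sign_nonpos {R : ℝ} (hR : 1 ≤ R) (n : ℤ) : (1 - R ^ n) * n.sign ≤ 0 := by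
  rcases lt_trichotomy n 0 with hn | rfl | hn
  · rw [Int.sign_eq_neg_one_of_neg hn]
    push_cast
    linarith [zpow_le_one_of_nonpos₀ hR hn.le]
  · simp
  · rw [Int.sign_eq_one_of_pos hn]
    push_cast
    linarith [one_le_zpow₀ hR hn.le]

lemma norm_sign_mul_sub_mul_I {n : ℤ} (hn : n ≠ 0) (α β : ℝ) :
    ‖(n.sign : ℂ) * α - β * I‖ = ‖Thi α β‖ := by
  rcases hn.lt_or_gt with hn | hn
  · rw [Int.sign_eq_neg_one_of_neg hn, Thi, ← norm_neg]
    congr 1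
    push_cast
    ring
  · rw [Int.sign_eq_one_of_pos hn, Thi, ← Complex.norm_conj]
    congr 1
    simp [sub_eq_add_neg]

lemma one_sub_mul_normSq_div (c : ℝ) (d E : ℂ) (hE : E ≠ 0) :
    1 - ((c * normSq d : ℝ) : ℂ) / (d * E) = (E - c * starRingEnd ℂ d) / E := by
  rcases eq_or_ne d 0 with rfl | hd
  · simp [hE]
  · rw [Complex.ofReal_mul, ← Complex.mul_conj, one_sub_div (mul_ne_zero hd hE)]
    field_simp

lemma re_add_ofReal_mul_conj (Θ : ℂ) (t : ℝ) :
    (Θ + t * starRingEnd ℂ Θ).re = (1 + t) * Θ.re := by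
  simp
  ring

lemma re_div_norm_le_norm_sub_div (Θ δ : ℂ) {t : ℝ} (hΘ : 0 < Θ.re) (ht : 0 ≤ t)
    (hδ : (1 - t) * δ.re ≤ 0) :
    Θ.re / ‖Θ‖ ≤ ‖(Θ + t * starRingEnd ℂ Θ - (1 - t) * δ) / (Θ + t * starRingEnd ℂ Θ)‖ := by
  set E := Θ + t * starRingEnd ℂ Θ
  have hE_re : E.re = (1 + t) * Θ.re := re_add_ofReal_mul_conj Θ t
  have hE_norm : ‖E‖ ≤ (1 + t) * ‖Θ‖ := by
    calc ‖E‖ ≤ ‖Θ‖ + ‖(t : ℂ) * starRingEnd ℂ Θ‖ := norm_add_le _ _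
      _ = (1 + t) * ‖Θ‖ := by
        rw [norm_mul, Complex.norm_conj, Complex.norm_real, Real.norm_of_nonneg ht]; ring
  have hnum : (1 + t) * Θ.re ≤ ‖E - (1 - t) * δ‖ := by
    refine le_trans ?_ (Complex.re_le_norm _)
    have : (E - (1 - t) * δ).re = (1 + t) * Θ.re - (1 - t) * δ.re := by
      simp [hE_re, ← Complex.ofReal_one, ← Complex.ofReal_sub]
    linarith
  have hEpos : 0 < ‖E‖ := lt_of_lt_of_le (by positivity) (hE_re ▸ Complex.re_le_norm E)
  calc Θ.re / ‖Θ‖ = (1 + t) * Θ.re / ((1 + t) * ‖Θ‖) := by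
        rw [mul_div_mul_left _ _ (by positivity)]
    _ ≤ ‖E - (1 - t) * δ‖ / ‖E‖ := div_le_div₀ (norm_nonneg _) hnum hEpos hE_norm
    _ = _ := (norm_div _ _).symm

theorem statement5_general (αi αo βi βo R : ℝ)
    (hαi : 0 < αi) (hαo : 0 < αo) (hR : 2 ≤ R) :
    ∃ C : ℝ, ∀ n : ℤ, n ≠ 0 →
      ‖(1 - lseq αi αo βi βo R n)⁻¹‖ ≤ C := by
  refine ⟨‖Tho αo βo‖ / αo, fun n hn => ?_⟩
  set d : ℂ := (n.sign : ℂ) * αi - βi * I with hd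
  set t : ℝ := R ^ (2 * n) with ht
  have hΘ : (Tho αo βo).re = αo := by simp [Tho]
  have hΘ_pos : 0 < (Tho αo βo).re := by rwa [hΘ]
  have ht_nonneg : 0 ≤ t := zpow_nonneg (by linarith) _
  have hsign : (1 - t) * (starRingEnd ℂ d).re ≤ 0 := by
    have h := one_sub_zpow_mul_sign_nonpos (one_le_pow₀ (by linarith) : 1 ≤ R ^ 2) n
    rw [← zpow_natCast, ← zpow_mul] at h
    simpa [hd, mul_assoc] using mul_nonpos_of_nonpos_of_nonneg h hαi.le
  have hE : Tho αo βo + t * starRingEnd ℂ (Tho αo βo) ≠ 0 := fun h => by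
    have := re_add_ofReal_mul_conj (Tho αo βo) t
    rw [h, zero_re] at this
    nlinarith
  have hl : 1 - lseq αi αo βi βo R n =
      (Tho αo βo + t * starRingEnd ℂ (Tho αo βo) - (1 - t) * starRingEnd ℂ d) /
        (Tho αo βo + t * starRingEnd ℂ (Tho αo βo)) := by
    rw [lseq, ← norm_sign_mul_sub_mul_I hn, ← Complex.normSq_eq_norm_sq, ← hd, ← ht,
      one_sub_mul_normSq_div _ _ _ hE, Complex.ofReal_sub, Complex.ofReal_one]
  have hbound := re_div_norm_le_norm_sub_div (Tho αo βo) (starRingEnd ℂ d) hΘ_pos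
    ht_nonneg hsign
  rw [hΘ, ← hl] at hbound
  have hΘ_norm : 0 < ‖Tho αo βo‖ := hΘ_pos.trans_le (Complex.re_le_norm _)
  rw [norm_inv, ← inv_div]
  exact inv_anti₀ (by positivity) hbound

/-- With `M_n := (1 − l_n)⁻¹`, the family `(M_n)_{n ≠ 0}` is bounded;
equivalently the quantities `|1 − l_n|` are uniformly bounded away from zero. -/
theorem statement5 (αi αo βi βo R : ℝ)
    (hαi : 0 < αi) (hαo : 0 < αo) (hβi : 0 ≤ βi) (hβo : 0 ≤ βo) (hR : 2 ≤ R) :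
    ∃ C : ℝ, ∀ n : ℤ, n ≠ 0 →
      ‖(1 - lseq αi αo βi βo R n)⁻¹‖ ≤ C :=
  statement5_general αi αo βi βo R hαi hαo hR
end

section
/- Define z_n := (A_n + i·sign(n)·B)/(A_n² + B²) for nonzero integers n. Then for every natural number m one has |n|^m·|z_{n+1} − z_n| → 0 as n → +∞ and also as n → −∞ (along integers n with n and n+1 both nonzero). -/
open Complex Filter

/-- `A_n := sign(n)·((R^{2n}+1)/(R^{2n}−1))·α_o + α_i`. -/
noncomputable def Aseq (αi αo R : ℝ) (n : ℤ) : ℝ :=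
  (n.sign : ℝ) * ((R ^ (2 * n) + 1) / (R ^ (2 * n) - 1)) * αo + αi

/-- `z_n := (A_n + i·sign(n)·B)/(A_n² + B²)` with `B := β_o − β_i`. -/
noncomputable def zseq (αi αo βi βo R : ℝ) (n : ℤ) : ℂ :=
  (((Aseq αi αo R n : ℝ) : ℂ) + Complex.I * (n.sign : ℂ) * ((βo - βi : ℝ) : ℂ)) /
    ((Aseq αi αo R n ^ 2 + (βo - βi) ^ 2 : ℝ) : ℂ)

/-!
For `n ≠ 0` we have `z_n = (A_n - i·sign(n)·B)⁻¹`, and `sign(n)` is the same for `n` and `n + 1`,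
so `z_{n+1} - z_n` is controlled by `|A_{n+1} - A_n|` divided by the square of the lower bound
`α_o + α_i` for the real parts `A_n`. Since `A_n = α_o·(R^{2|n|}+1)/(R^{2|n|}-1) + α_i`, the
sequence `A_n` approaches `α_o + α_i` within `4α_o·R^{-2|n|}`, and this geometric decay beats
every power `|n|^m`.
-/

lemma Int.tendsto_natAbs_cofinite_atTop : Tendsto Int.natAbs cofinite atTop := by
  rw [← Nat.cofinite_eq_atTop]
  refine Tendsto.cofinite_of_finite_preimage_singleton fun k => ?_
  refine (Set.toFinite ({(k : ℤ), -(k : ℤ)} : Set ℤ)).subset fun n hn => ?_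
  simpa [Int.natAbs_eq_iff] using hn

lemma tendsto_natAbs_pow_mul_pow_cofinite (m : ℕ) {r : ℝ} (hr : |r| < 1) :
    Tendsto (fun n : ℤ => (n.natAbs : ℝ) ^ m * r ^ n.natAbs) cofinite (nhds 0) :=
  (tendsto_pow_const_mul_const_pow_of_abs_lt_one m hr).comp Int.tendsto_natAbs_cofinite_atTop

namespace Complex

lemma ofReal_add_I_mul_div_eq_inv (a b : ℝ) :
    ((a : ℂ) + I * b) / ((a ^ 2 + b ^ 2 : ℝ) : ℂ) = ((a : ℂ) - I * b)⁻¹ := by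
  rw [inv_def, normSq_apply]
  simp only [map_sub, conj_ofReal, map_mul, conj_I, sub_re, ofReal_re, mul_re, I_re, I_im,
    ofReal_im, sub_im, mul_im]
  push_cast
  ring

lemma norm_inv_sub_inv_le {v w : ℂ} {c : ℝ} (hc : 0 < c) (hv : c ≤ v.re) (hw : c ≤ w.re) :
    ‖v⁻¹ - w⁻¹‖ ≤ ‖w - v‖ / c ^ 2 := by
  have hv' : c ≤ ‖v‖ := hv.trans (le_abs_self _ |>.trans (abs_re_le_norm v))
  have hw' : c ≤ ‖w‖ := hw.trans (le_abs_self _ |>.trans (abs_re_le_norm w))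
  have hv0 : v ≠ 0 := norm_pos_iff.1 (hc.trans_le hv')
  have hw0 : w ≠ 0 := norm_pos_iff.1 (hc.trans_le hw')
  rw [inv_sub_inv hv0 hw0, norm_div, norm_mul, sq]
  gcongr

end Complex

lemma add_one_div_sub_one_mem_Icc {y : ℝ} (hy : 2 ≤ y) :
    1 ≤ (y + 1) / (y - 1) ∧ (y + 1) / (y - 1) ≤ 1 + 4 / y := by
  have h1 : 0 < y - 1 := by linarith
  constructor
  · rw [le_div_iff₀ h1]; linarith
  · have h2 : 2 ≤ 4 / y * (y - 1) := by
      rw [div_mul_eq_mul_div, le_div_iff₀ (by linarith)]; linarith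
    rw [div_le_iff₀ h1]; linarith

lemma neg_inv_add_one_div_inv_sub_one {y : ℝ} (hy : y ≠ 0) :
    -((y⁻¹ + 1) / (y⁻¹ - 1)) = (y + 1) / (y - 1) := by
  field_simp
  rw [← div_neg, neg_sub, add_comm]

section

variable (αi αo βi βo : ℝ) {R : ℝ}

lemma Aseq_eq_of_ne_zero (hR : R ≠ 0) {n : ℤ} (hn : n ≠ 0) :
    Aseq αi αo R n = ((R ^ 2) ^ n.natAbs + 1) / ((R ^ 2) ^ n.natAbs - 1) * αo + αi := by
  rw [Aseq, zpow_mul, zpow_ofNat]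
  obtain ⟨k, rfl | rfl⟩ := Int.eq_nat_or_neg n
  · have hk : k ≠ 0 := by exact_mod_cast hn
    simp [Int.sign_natCast_of_ne_zero hk]
  · have hk : k ≠ 0 := by simpa using hn
    have hRk : (R ^ 2) ^ k ≠ 0 := by positivity
    simp [Int.sign_natCast_of_ne_zero hk, neg_inv_add_one_div_inv_sub_one hRk]

lemma Aseq_mem_Icc (hR : 2 ≤ R) (hαo : 0 ≤ αo) {n : ℤ} (hn : n ≠ 0) :
    αo + αi ≤ Aseq αi αo R n ∧ Aseq αi αo R n ≤ αo + αi + 4 * αo * ((R ^ 2)⁻¹) ^ n.natAbs := by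
  have hy : 2 ≤ (R ^ 2) ^ n.natAbs := calc
    (2 : ℝ) ≤ R ^ 2 := by nlinarith
    _ ≤ (R ^ 2) ^ n.natAbs := le_self_pow₀ (by nlinarith) (by simpa using hn)
  obtain ⟨hlo, hhi⟩ := add_one_div_sub_one_mem_Icc hy
  rw [Aseq_eq_of_ne_zero αi αo (by positivity) hn]
  constructor
  · linarith [mul_le_mul_of_nonneg_right hlo hαo]
  · calc _ ≤ (1 + 4 / (R ^ 2) ^ n.natAbs) * αo + αi := by gcongr
      _ = _ := by rw [inv_pow]; ring

lemma abs_Aseq_sub_Aseq_succ_le (hR : 2 ≤ R) (hαo : 0 ≤ αo) {n : ℤ} (hn : n ≠ 0)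
    (hn1 : n + 1 ≠ 0) :
    |Aseq αi αo R n - Aseq αi αo R (n + 1)| ≤ 4 * αo * (1 + R ^ 2) * ((R ^ 2)⁻¹) ^ n.natAbs := by
  obtain ⟨hlo, hhi⟩ := Aseq_mem_Icc αi αo hR hαo hn
  obtain ⟨hlo1, hhi1⟩ := Aseq_mem_Icc αi αo hR hαo hn1
  set r := (R ^ 2)⁻¹
  have hRr : R ^ 2 * r = 1 := mul_inv_cancel₀ (by positivity)
  have hr : r ^ (n + 1).natAbs ≤ R ^ 2 * r ^ n.natAbs := calc
    r ^ (n + 1).natAbs = R ^ 2 * r ^ ((n + 1).natAbs + 1) := by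
      rw [pow_succ' r, ← mul_assoc, hRr, one_mul]
    _ ≤ R ^ 2 * r ^ n.natAbs := by
      refine mul_le_mul_of_nonneg_left (pow_le_pow_of_le_one (by positivity) ?_ (by omega))
        (by positivity)
      exact inv_le_one_of_one_le₀ (by nlinarith)
  rw [abs_le]
  constructor <;> nlinarith

lemma zseq_eq_inv {n : ℤ} (hn : n ≠ 0) :
    zseq αi αo βi βo R n = ((Aseq αi αo R n : ℂ) - I * ((n.sign * (βo - βi) : ℝ) : ℂ))⁻¹ := by
  have hsign : (n.sign : ℝ) ^ 2 = 1 := by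
    rcases hn.lt_or_gt with h | h <;> simp [Int.sign_eq_neg_one_of_neg, Int.sign_eq_one_of_pos, h]
  rw [← ofReal_add_I_mul_div_eq_inv, mul_pow, hsign, one_mul, zseq]
  push_cast
  ring

lemma norm_zseq_succ_sub_le (hR : 2 ≤ R) (hαi : 0 < αi) (hαo : 0 < αo) {n : ℤ} (hn : n ≠ 0)
    (hn1 : n + 1 ≠ 0) :
    ‖zseq αi αo βi βo R (n + 1) - zseq αi αo βi βo R n‖ ≤
      4 * αo * (1 + R ^ 2) / (αo + αi) ^ 2 * ((R ^ 2)⁻¹) ^ n.natAbs := by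
  have hsign : (n + 1).sign = n.sign := by
    rcases hn.lt_or_gt with h | h
    · rw [Int.sign_eq_neg_one_of_neg h, Int.sign_eq_neg_one_of_neg (by omega)]
    · rw [Int.sign_eq_one_of_pos h, Int.sign_eq_one_of_pos (by omega)]
  have hdiff : ((Aseq αi αo R n : ℂ) - I * ((n.sign * (βo - βi) : ℝ) : ℂ)) -
      ((Aseq αi αo R (n + 1) : ℂ) - I * ((n.sign * (βo - βi) : ℝ) : ℂ)) =
      ((Aseq αi αo R n - Aseq αi αo R (n + 1) : ℝ) : ℂ) := by
    push_cast; ring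
  rw [zseq_eq_inv αi αo βi βo hn1, zseq_eq_inv αi αo βi βo hn, hsign]
  refine (norm_inv_sub_inv_le (c := αo + αi) (by positivity)
    (by simpa using (Aseq_mem_Icc αi αo hR hαo.le hn1).1)
    (by simpa using (Aseq_mem_Icc αi αo hR hαo.le hn).1)).trans ?_
  rw [hdiff, norm_real, Real.norm_eq_abs, div_mul_eq_mul_div]
  gcongr
  exact abs_Aseq_sub_Aseq_succ_le αi αo hR hαo.le hn hn1

end

theorem statement9_general (αi αo βi βo R : ℝ)
    (hαi : 0 < αi) (hαo : 0 < αo) (hR : 2 ≤ R) :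
    ∀ m : ℕ,
      Tendsto (fun n : ℤ =>
          (|n| : ℝ) ^ m * ‖zseq αi αo βi βo R (n + 1) - zseq αi αo βi βo R n‖)
        atTop (nhds 0)
      ∧ Tendsto (fun n : ℤ =>
          (|n| : ℝ) ^ m * ‖zseq αi αo βi βo R (n + 1) - zseq αi αo βi βo R n‖)
        atBot (nhds 0) := by
  intro m
  have hr : |(R ^ 2)⁻¹| < 1 := by
    rw [abs_inv, abs_of_pos (by positivity)]
    exact inv_lt_one_of_one_lt₀ (by nlinarith)
  have hlim := (tendsto_natAbs_pow_mul_pow_cofinite m hr).const_mul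
    (4 * αo * (1 + R ^ 2) / (αo + αi) ^ 2)
  rw [mul_zero] at hlim
  have hcof : Tendsto (fun n : ℤ =>
      (|n| : ℝ) ^ m * ‖zseq αi αo βi βo R (n + 1) - zseq αi αo βi βo R n‖) cofinite (nhds 0) := by
    refine squeeze_zero' (.of_forall fun n => by positivity) ?_ hlim
    filter_upwards [(Set.toFinite {0, -1}).compl_mem_cofinite] with n hn
    simp only [Set.mem_compl_iff, Set.mem_insert_iff, Set.mem_singleton_iff, not_or] at hn
    rw [← Int.cast_abs, ← Nat.cast_natAbs, mul_left_comm]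
    gcongr
    exact norm_zseq_succ_sub_le αi αo βi βo hR hαi hαo hn.1 (by omega)
  exact ⟨hcof.mono_left atTop_le_cofinite, hcof.mono_left atBot_le_cofinite⟩

/-- For every natural number `m` one has `|n|^m·|z_{n+1} − z_n| → 0`
as `n → +∞` and as `n → −∞`. -/
theorem statement9 (αi αo βi βo R : ℝ)
    (hαi : 0 < αi) (hαo : 0 < αo) (hβi : 0 ≤ βi) (hβo : 0 ≤ βo) (hR : 2 ≤ R) :
    ∀ m : ℕ,
      Tendsto (fun n : ℤ =>
          (|n| : ℝ) ^ m * ‖zseq αi αo βi βo R (n + 1) - zseq αi αo βi βo R n‖)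
        atTop (nhds 0)
      ∧ Tendsto (fun n : ℤ =>
          (|n| : ℝ) ^ m * ‖zseq αi αo βi βo R (n + 1) - zseq αi αo βi βo R n‖)
        atBot (nhds 0) :=
  statement9_general αi αo βi βo R hαi hαo hR
end

section
/- One has Re q_n → −∞ as |n| → ∞; consequently the supremum sup_{n ∈ ℤ \ {0}} Re q_n is finite, i.e. there exists λ* ∈ ℝ with Re q_n < λ* for every n ≠ 0. -/
open Complex Filter

/-- `μ(n) := |n|·(σ − 2(γ_o − γ_i) − σ·n²)`. -/
noncomputable def museq (σ γi γo : ℝ) (n : ℤ) : ℝ :=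
  (|n| : ℝ) * (σ - 2 * (γo - γi) - σ * (n : ℝ) ^ 2)

/-- `q_n := ((A_n + i·sign(n)·B)/(A_n² + B²))·μ(n)` with `B := β_o − β_i`,
the Fourier symbol (44) of the linearized evolution operator. -/
noncomputable def qseq (αi αo βi βo R σ γi γo : ℝ) (n : ℤ) : ℂ :=
  (((Aseq αi αo R n : ℝ) : ℂ) + Complex.I * (n.sign : ℂ) * ((βo - βi : ℝ) : ℂ)) /
    ((Aseq αi αo R n ^ 2 + (βo - βi) ^ 2 : ℝ) : ℂ) * ((museq σ γi γo n : ℝ) : ℂ)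

lemma qseq_re (αi αo βi βo R σ γi γo : ℝ) (n : ℤ) :
    (qseq αi αo βi βo R σ γi γo n).re =
      Aseq αi αo R n / (Aseq αi αo R n ^ 2 + (βo - βi) ^ 2) * museq σ γi γo n := by
  have h : qseq αi αo βi βo R σ γi γo n =
      Complex.ofReal (Aseq αi αo R n / (Aseq αi αo R n ^ 2 + (βo - βi) ^ 2) * museq σ γi γo n)
      + Complex.ofReal ((n.sign : ℝ) * (βo - βi) / (Aseq αi αo R n ^ 2 + (βo - βi) ^ 2)
          * museq σ γi γo n) * Complex.I := by
    simp only [qseq]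
    push_cast
    ring
  rw [h]
  simp only [Complex.add_re, Complex.mul_re, Complex.ofReal_re, Complex.ofReal_im,
    Complex.I_re, Complex.I_im]
  ring

lemma Aseq_bounds (αi αo R : ℝ) (hαo : 0 < αo) (hR : 2 ≤ R) (n : ℤ) (hn : n ≠ 0) :
    αi + αo ≤ Aseq αi αo R n ∧ Aseq αi αo R n ≤ αi + 2 * αo := by
  have hR1 : (1:ℝ) ≤ R := by linarith
  rcases lt_or_gt_of_ne hn with hneg | hpos
  · have hs : (n.sign : ℝ) = -1 := by
      rw [Int.sign_eq_neg_one_iff_neg.mpr hneg]; norm_num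
    set t := R ^ (2*n) with hto
    have ht0 : 0 < t := zpow_pos (by linarith) _
    have htle : t ≤ 1/4 := by
      calc t ≤ R ^ (-2:ℤ) := zpow_le_zpow_right₀ hR1 (by omega)
        _ ≤ 1/4 := by rw [zpow_neg, zpow_two, inv_le_comm₀] <;> nlinarith
    have hden : 0 < 1 - t := by linarith
    have hratio : -((t+1)/(t-1)) = (t+1)/(1-t) := by
      rw [← div_neg]; ring_nf
    have h1 : 1 ≤ (t+1)/(1-t) := by rw [le_div_iff₀ hden]; linarith
    have h2 : (t+1)/(1-t) ≤ 2 := by rw [div_le_iff₀ hden]; linarith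
    unfold Aseq
    rw [hs]
    constructor <;> nlinarith [hratio]
  · have hs : (n.sign : ℝ) = 1 := by
      rw [Int.sign_eq_one_iff_pos.mpr hpos]; norm_num
    set t := R ^ (2*n) with hto
    have htge : (4:ℝ) ≤ t := by
      calc (4:ℝ) ≤ R ^ (2:ℤ) := by rw [zpow_two]; nlinarith
        _ ≤ t := zpow_le_zpow_right₀ hR1 (by omega)
    have hden : 0 < t - 1 := by linarith
    have h1 : 1 ≤ (t+1)/(t-1) := by rw [le_div_iff₀ hden]; linarith
    have h2 : (t+1)/(t-1) ≤ 2 := by rw [div_le_iff₀ hden]; linarith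
    unfold Aseq
    rw [hs]
    constructor <;> nlinarith

/-- `Re q_n → −∞` as `|n| → ∞` (i.e. along the cofinite filter on `ℤ`);
consequently there is `λ* ∈ ℝ` with `Re q_n < λ*` for every `n ≠ 0`. -/
theorem statement12 (αi αo βi βo R σ γi γo : ℝ)
    (hαi : 0 < αi) (hαo : 0 < αo) (hβi : 0 ≤ βi) (hβo : 0 ≤ βo) (hR : 2 ≤ R)
    (hσ : 0 < σ) :
    Tendsto (fun n : ℤ => (qseq αi αo βi βo R σ γi γo n).re) cofinite atBot
    ∧ ∃ lamStar : ℝ, ∀ n : ℤ, n ≠ 0 →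
        (qseq αi αo βi βo R σ γi γo n).re < lamStar := by
  have ha : 0 < αi + αo := by linarith
  have hb : 0 < αi + 2 * αo := by linarith
  set c : ℝ := (αi + αo) / ((αi + 2*αo)^2 + (βo - βi)^2) with hcdef
  have hc0 : 0 < c := by positivity
  -- the real part is bounded by c·μ(n) when μ(n) ≤ 0
  have hfrac : ∀ n : ℤ, n ≠ 0 →
      c ≤ Aseq αi αo R n / (Aseq αi αo R n ^ 2 + (βo - βi) ^ 2) := by
    intro n hn
    obtain ⟨h1, h2⟩ := Aseq_bounds αi αo R hαo hR n hn
    have hApos : 0 < Aseq αi αo R n := lt_of_lt_of_le ha h1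
    exact div_le_div₀ (le_of_lt hApos) h1 (by positivity) (by nlinarith)
  have hkey : ∀ n : ℤ, n ≠ 0 → museq σ γi γo n ≤ 0 →
      (qseq αi αo βi βo R σ γi γo n).re ≤ c * museq σ γi γo n := by
    intro n hn hμ
    rw [qseq_re]
    exact mul_le_mul_of_nonpos_right (hfrac n hn) hμ
  -- choose m₀ with σ·m₀² ≥ σ − 2(γo−γi) + 1
  obtain ⟨m₀, hm₀⟩ := exists_nat_gt ((σ - 2*(γo - γi) + 1)/σ)
  have hm₀sq : σ - 2*(γo - γi) + 1 ≤ σ * (m₀:ℝ)^2 := by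
    have h1 : (m₀:ℝ) ≤ (m₀:ℝ)^2 := by
      have := Nat.le_self_pow (two_ne_zero) m₀
      exact_mod_cast this
    have h2 : σ - 2*(γo - γi) + 1 < σ * (m₀:ℝ) := by
      rw [div_lt_iff₀ hσ] at hm₀; linarith
    nlinarith
  -- μ(n) ≤ −|n| for |n| ≥ m₀
  have hμle : ∀ n : ℤ, (m₀:ℤ) ≤ |n| → museq σ γi γo n ≤ -(|n| : ℝ) := by
    intro n hn
    have habs : (m₀:ℝ) ≤ (|n| : ℝ) := by exact_mod_cast hn
    have habs0 : (0:ℝ) ≤ (|n| : ℝ) := by positivity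
    have hsq : (m₀:ℝ)^2 ≤ (n:ℝ)^2 := by
      nlinarith [_root_.sq_abs (n:ℝ), abs_nonneg (n:ℝ)]
    have hfac : σ - 2*(γo - γi) - σ * (n:ℝ)^2 ≤ -1 := by nlinarith
    calc museq σ γi γo n = (|n| : ℝ) * (σ - 2 * (γo - γi) - σ * (n : ℝ) ^ 2) := rfl
      _ ≤ (|n| : ℝ) * (-1) := by
          exact mul_le_mul_of_nonneg_left hfac habs0
      _ = -(|n| : ℝ) := by ring
  have htend : Tendsto (fun n : ℤ => (qseq αi αo βi βo R σ γi γo n).re) cofinite atBot := by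
    rw [tendsto_atBot]
    intro b
    rw [eventually_cofinite]
    obtain ⟨M, hM⟩ := exists_nat_gt (-b / c)
    set N : ℤ := max (m₀:ℤ) (max (M:ℤ) 1) with hNdef
    apply Set.Finite.subset (Set.finite_Icc (-N) N)
    intro n hnmem
    simp only [Set.mem_setOf_eq, not_le] at hnmem
    by_contra hnot
    simp only [Set.mem_Icc, not_and_or, not_le] at hnot
    have habs : N < |n| := by
      rcases hnot with h | h
      · have := neg_le_abs n; linarith
      · have := le_abs_self n; linarith
    have hN1 : (1:ℤ) ≤ N := le_max_of_le_right (le_max_right _ _)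
    have hn0 : n ≠ 0 := abs_pos.mp (by linarith)
    have hμ1 : museq σ γi γo n ≤ -(|n| : ℝ) := by
      apply hμle
      have : (m₀:ℤ) ≤ N := le_max_left _ _
      linarith
    have habsR : ((M:ℝ)) ≤ (|n| : ℝ) := by
      have h1 : (M:ℤ) ≤ |n| := by
        have : (M:ℤ) ≤ N := le_max_of_le_right (le_max_left _ _)
        linarith
      exact_mod_cast h1
    have habs0 : (0:ℝ) ≤ (|n| : ℝ) := by positivity
    have hμ0 : museq σ γi γo n ≤ 0 := by linarith
    have h2 := hkey n hn0 hμ0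
    have h3 : c * museq σ γi γo n ≤ c * (-(|n| : ℝ)) :=
      mul_le_mul_of_nonneg_left hμ1 (le_of_lt hc0)
    have h4 : c * (M:ℝ) ≤ c * (|n| : ℝ) :=
      mul_le_mul_of_nonneg_left habsR (le_of_lt hc0)
    have h5 : -b < c * (M:ℝ) := by
      rw [div_lt_iff₀ hc0] at hM; linarith
    linarith
  refine ⟨htend, ?_⟩
  have hev : ∀ᶠ n in (cofinite : Filter ℤ), (qseq αi αo βi βo R σ γi γo n).re < 0 :=
    htend.eventually (eventually_lt_atBot 0)
  rw [eventually_cofinite] at hev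
  have hfin : ((fun n => (qseq αi αo βi βo R σ γi γo n).re) ''
      {n | ¬ (qseq αi αo βi βo R σ γi γo n).re < 0}).Finite := hev.image _
  obtain ⟨Mb, hMb⟩ := hfin.bddAbove
  refine ⟨max Mb 0 + 1, fun n _ => ?_⟩
  by_cases h : (qseq αi αo βi βo R σ γi γo n).re < 0
  · have : (0:ℝ) ≤ max Mb 0 := le_max_right _ _
    linarith
  · have h1 : (qseq αi αo βi βo R σ γi γo n).re ≤ Mb := hMb ⟨n, h, rfl⟩
    have h2 : Mb ≤ max Mb 0 := le_max_left _ _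
    linarith
end

section
/- Setting q_0 := 0, the sequence (q_n) satisfies the difference estimates: sup_{n ∈ ℤ \ {0}} |q_{n+1} − q_n| / n² < ∞, and sup_{n ∈ ℤ \ {0}} | q_n·(q_{n+1} − q_{n+2}) + q_{n+2}·(q_{n+1} − q_n) | / n⁴ < ∞. -/
open Complex Filter

/-- The extension of the sequence `q` by `q_0 := 0`. -/
noncomputable def qseq0 (αi αo βi βo R σ γi γo : ℝ) (n : ℤ) : ℂ :=
  if n = 0 then 0 else qseq αi αo βi βo R σ γi γo n

/-! For `n > 0` the symbol `(A_n + iB)/(A_n² + B²)` is `(A_n - iB)⁻¹`, and `A_n` tends to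
`α_i + α_o` at the rate `R^{-2n}`. As `μ` grows only cubically, `q_n = c μ(n) + O(1)` with
`c = (α_i + α_o - iB)⁻¹`, so the first and second differences of `q` inherit the bounds `O(n²)`
and `O(n)` of those of the cubic `μ`. The identity
`q_n (q_{n+1} - q_{n+2}) + q_{n+2} (q_{n+1} - q_n) = 2 Δq_n Δq_{n+1} - q_{n+1} Δ²q_n`
then gives `O(n⁴)`. Negative indices reduce to positive ones through `q_{-n} = conj q_n`. -/

open Asymptotics ComplexConjugate

section PowerGrowth

lemma isBigO_pow_comp_of_abs_le {φ : ℤ → ℤ} {k : ℤ} (j : ℕ) (hφ : ∀ n, |φ n| ≤ |n| + k) :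
    (fun n => ((φ n : ℤ) : ℝ) ^ j) =O[cofinite] fun n : ℤ => (n : ℝ) ^ j := by
  refine IsBigO.of_bound ((1 + |(k : ℝ)|) ^ j) ?_
  filter_upwards [eventually_cofinite_ne 0] with n hn
  have hn1 : (1 : ℝ) ≤ |(n : ℝ)| := by exact_mod_cast Int.one_le_abs hn
  have hφn : |(φ n : ℝ)| ≤ (1 + |(k : ℝ)|) * |(n : ℝ)| := by
    have hφ' : |(φ n : ℝ)| ≤ |(n : ℝ)| + k := by exact_mod_cast hφ n
    nlinarith [le_abs_self (k : ℝ), abs_nonneg (k : ℝ)]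
  simp only [norm_pow, Real.norm_eq_abs, ← mul_pow]
  exact pow_le_pow_left₀ (abs_nonneg _) hφn j

lemma Asymptotics.IsBigO.comp_add_const_pow {E : Type*} [Norm E] {f : ℤ → E} {j : ℕ}
    (hf : f =O[atTop] fun n : ℤ => (n : ℝ) ^ j) (k : ℤ) :
    (fun n => f (n + k)) =O[atTop] fun n : ℤ => (n : ℝ) ^ j :=
  (hf.comp_tendsto (tendsto_atTop_add_const_right _ k tendsto_id)).trans
    ((isBigO_pow_comp_of_abs_le j fun n => abs_add_le n k).mono atTop_le_cofinite)

lemma isBigO_intCast_pow_pow_of_le {i j : ℕ} (hij : i ≤ j) :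
    (fun n : ℤ => (n : ℝ) ^ i) =O[atTop] fun n : ℤ => (n : ℝ) ^ j := by
  refine IsBigO.of_bound 1 ?_
  filter_upwards [eventually_ge_atTop 1] with n hn
  have hn : (1 : ℝ) ≤ n := by exact_mod_cast hn
  simp only [norm_pow, Real.norm_eq_abs, abs_of_nonneg (zero_le_one.trans hn), one_mul]
  exact pow_le_pow_right₀ hn hij

lemma isBigO_one_intCast_pow (j : ℕ) :
    (fun _ : ℤ => (1 : ℝ)) =O[atTop] fun n : ℤ => (n : ℝ) ^ j := by
  simpa using isBigO_intCast_pow_pow_of_le (Nat.zero_le j)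

lemma isBigO_intCast_pow_zpow {ρ : ℝ} (hρ : 1 < ρ) (j : ℕ) :
    (fun n : ℤ => (n : ℝ) ^ j) =O[atTop] fun n : ℤ => ρ ^ n := by
  rw [← Nat.map_cast_int_atTop, isBigO_map]
  simpa [Function.comp_def] using (isLittleO_pow_const_const_pow_of_one_lt (R := ℝ) j hρ).isBigO

lemma isBigO_of_sub_const_mul_isBigO_one {α : Type*} {l : Filter α} {f : α → ℂ} {p g : α → ℝ}
    {c : ℂ} (hr : (fun n => f n - c * p n) =O[l] fun _ => (1 : ℝ)) (hp : p =O[l] g)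
    (h1 : (fun _ => (1 : ℝ)) =O[l] g) : f =O[l] g :=
  ((Complex.isBigO_ofReal_left.mpr hp).const_mul_left c).add (hr.trans h1) |>.congr_left
    fun n => by ring

lemma isBigO_mul_sub_add_mul_sub {𝕜 : Type*} [NormedField 𝕜] {f : ℤ → 𝕜}
    (h0 : f =O[atTop] fun n : ℤ => (n : ℝ) ^ 3)
    (h1 : (fun n => f (n + 1) - f n) =O[atTop] fun n : ℤ => (n : ℝ) ^ 2)
    (h2 : (fun n => f (n + 2) - 2 * f (n + 1) + f n) =O[atTop] fun n : ℤ => (n : ℝ) ^ 1) :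
    (fun n => f n * (f (n + 1) - f (n + 2)) + f (n + 2) * (f (n + 1) - f n))
      =O[atTop] fun n : ℤ => (n : ℝ) ^ 4 := by
  have h1' := h1.comp_add_const_pow 1
  simp only [add_assoc, one_add_one_eq_two] at h1'
  have hdiffs : (fun n => 2 * ((f (n + 1) - f n) * (f (n + 2) - f (n + 1))))
      =O[atTop] fun n : ℤ => (n : ℝ) ^ 4 :=
    ((h1.mul h1').const_mul_left 2).congr_right fun n => by ring
  have hsecond : (fun n => f (n + 1) * (f (n + 2) - 2 * f (n + 1) + f n))
      =O[atTop] fun n : ℤ => (n : ℝ) ^ 4 :=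
    ((h0.comp_add_const_pow 1).mul h2).congr_right fun n => by ring
  exact (hdiffs.sub hsecond).congr_left fun n => by ring

end PowerGrowth

section Reflection

lemma isBigO_cofinite_of_norm_comp_neg_sub {E : Type*} [SeminormedAddCommGroup E] {g : ℤ → E}
    {j : ℕ} (s : ℤ) (hg : g =O[atTop] fun n : ℤ => (n : ℝ) ^ j)
    (hsymm : ∀ n, ‖g (-n - s)‖ = ‖g n‖) :
    g =O[cofinite] fun n : ℤ => (n : ℝ) ^ j := by
  rw [Int.cofinite_eq]
  refine IsBigO.sup ?_ hg
  have hreflect : (fun n => g (-n - s)) =O[atTop] fun n : ℤ => (n : ℝ) ^ j :=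
    (isBigO_of_le _ fun n => (hsymm n).le).trans hg
  have hφ : Tendsto (fun m : ℤ => -m - s) atBot atTop := by
    simpa only [sub_eq_add_neg] using tendsto_atTop_add_const_right _ (-s) tendsto_neg_atBot_atTop
  refine ((hreflect.comp_tendsto hφ).congr_left fun m => by simp).trans
    ((isBigO_pow_comp_of_abs_le j (k := |s|) fun n => ?_).mono atBot_le_cofinite)
  simpa only [abs_neg] using abs_sub (-n) s

lemma exists_norm_div_pow_le_of_isBigO_cofinite {E : Type*} [SeminormedAddCommGroup E]
    {f : ℤ → E} {j : ℕ} (h : f =O[cofinite] fun n : ℤ => (n : ℝ) ^ j) :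
    ∃ C : ℝ, ∀ n : ℤ, n ≠ 0 → ‖f n‖ / (n : ℝ) ^ j ≤ C := by
  obtain ⟨C, -, hC⟩ := bound_of_isBigO_cofinite h
  refine ⟨C, fun n hn => ?_⟩
  have hpow : (n : ℝ) ^ j ≠ 0 := pow_ne_zero _ (Int.cast_ne_zero.mpr hn)
  calc ‖f n‖ / (n : ℝ) ^ j ≤ |‖f n‖ / (n : ℝ) ^ j| := le_abs_self _
    _ = ‖f n‖ / ‖(n : ℝ) ^ j‖ := by rw [abs_div, abs_norm, Real.norm_eq_abs]
    _ ≤ C := (div_le_iff₀ (norm_pos_iff.mpr hpow)).mpr (hC hpow)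

lemma norm_sub_comp_neg_sub_one {f : ℤ → ℂ} (hf : ∀ n, f (-n) = conj (f n)) (n : ℤ) :
    ‖f (-n - 1 + 1) - f (-n - 1)‖ = ‖f (n + 1) - f n‖ := by
  rw [show -n - 1 + 1 = -n by ring, show -n - 1 = -(n + 1) by ring, hf, hf, ← map_sub, norm_conj,
    norm_sub_rev]

lemma norm_mul_sub_add_mul_sub_comp_neg_sub_two {f : ℤ → ℂ} (hf : ∀ n, f (-n) = conj (f n))
    (n : ℤ) :
    ‖f (-n - 2) * (f (-n - 2 + 1) - f (-n - 2 + 2))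
        + f (-n - 2 + 2) * (f (-n - 2 + 1) - f (-n - 2))‖
      = ‖f n * (f (n + 1) - f (n + 2)) + f (n + 2) * (f (n + 1) - f n)‖ := by
  rw [show -n - 2 + 1 = -(n + 1) by ring, show -n - 2 + 2 = -n by ring,
    show -n - 2 = -(n + 2) by ring, hf, hf, hf, ← norm_conj]
  simp only [map_add, map_mul, map_sub, conj_conj]
  congr 1
  ring

end Reflection

section Symmetry

lemma Aseq_neg {R : ℝ} (hR : R ≠ 0) (αi αo : ℝ) (n : ℤ) :
    Aseq αi αo R (-n) = Aseq αi αo R n := by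
  have hx : R ^ (2 * n) ≠ 0 := zpow_ne_zero _ hR
  unfold Aseq
  rw [Int.sign_neg, mul_neg, zpow_neg]
  push_cast
  rcases eq_or_ne (R ^ (2 * n)) 1 with h1 | h1
  · simp [h1]
  · have h1' : R ^ (2 * n) - 1 ≠ 0 := sub_ne_zero.mpr h1
    have h2 : (R ^ (2 * n))⁻¹ - 1 ≠ 0 := by
      rw [sub_ne_zero]; exact fun h => h1 (inv_eq_one.mp h)
    field_simp
    ring

lemma museq_neg (σ γi γo : ℝ) (n : ℤ) : museq σ γi γo (-n) = museq σ γi γo n := by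
  simp [museq]

lemma qseq_neg {R : ℝ} (hR : R ≠ 0) (αi αo βi βo σ γi γo : ℝ) (n : ℤ) :
    qseq αi αo βi βo R σ γi γo (-n) = conj (qseq αi αo βi βo R σ γi γo n) := by
  simp only [qseq, Aseq_neg hR, museq_neg, Int.sign_neg, map_mul, map_div₀, map_add, conj_ofReal,
    conj_I, map_intCast, Int.cast_neg]
  ring

lemma qseq0_eq_qseq (αi αo βi βo R σ γi γo : ℝ) :
    qseq0 αi αo βi βo R σ γi γo = qseq αi αo βi βo R σ γi γo := by
  ext n
  rcases eq_or_ne n 0 with rfl | hn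
  · simp [qseq0, qseq, museq]
  · simp [qseq0, hn]

end Symmetry

section Symbol

lemma ofReal_add_I_mul_div_normSq (a b : ℝ) :
    ((a : ℂ) + I * b) / ((a ^ 2 + b ^ 2 : ℝ) : ℂ) = ((a : ℂ) - I * b)⁻¹ := by
  rw [inv_def, div_eq_mul_inv, normSq_apply]
  simp only [map_sub, map_mul, conj_ofReal, conj_I, sub_re, sub_im, ofReal_re, ofReal_im, mul_re,
    mul_im, I_re, I_im]
  push_cast
  ring

lemma qseq_eq_div {n : ℤ} (hn : 0 < n) (αi αo βi βo R σ γi γo : ℝ) :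
    qseq αi αo βi βo R σ γi γo n =
      museq σ γi γo n / ((Aseq αi αo R n : ℂ) - I * (βo - βi : ℝ)) := by
  rw [qseq, Int.sign_eq_one_of_pos hn, Int.cast_one, mul_one, ofReal_add_I_mul_div_normSq,
    div_eq_mul_inv, mul_comm]

lemma norm_inv_sub_inv_le {z w : ℂ} {m : ℝ} (hm : 0 < m) (hz : m ≤ z.re) (hw : m ≤ w.re) :
    ‖z⁻¹ - w⁻¹‖ ≤ ‖w - z‖ / m ^ 2 := by
  have hz' : m ≤ ‖z‖ := hz.trans (re_le_norm z)
  have hw' : m ≤ ‖w‖ := hw.trans (re_le_norm w)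
  have hz0 : z ≠ 0 := norm_pos_iff.mp (hm.trans_le hz')
  have hw0 : w ≠ 0 := norm_pos_iff.mp (hm.trans_le hw')
  rw [inv_sub_inv hz0 hw0, norm_div, norm_mul, sq]
  gcongr

end Symbol

section Aseq

variable {R : ℝ} (αi : ℝ) {αo : ℝ}

lemma Aseq_sub_of_pos (hR : 1 < R) {n : ℤ} (hn : 0 < n) :
    Aseq αi αo R n - (αi + αo) = 2 * αo / ((R ^ 2) ^ n - 1) := by
  have hx : 1 < (R ^ 2) ^ n := one_lt_zpow₀ (one_lt_pow₀ hR two_ne_zero) hn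
  rw [Aseq, Int.sign_eq_one_of_pos hn, zpow_mul, zpow_ofNat]
  field_simp [(sub_pos.mpr hx).ne']
  push_cast
  ring

lemma add_le_Aseq (hR : 1 < R) (hαo : 0 ≤ αo) {n : ℤ} (hn : 0 < n) :
    αi + αo ≤ Aseq αi αo R n := by
  have hx : 1 < (R ^ 2) ^ n := one_lt_zpow₀ (one_lt_pow₀ hR two_ne_zero) hn
  have hdiff := Aseq_sub_of_pos αi hR hn (αo := αo)
  have : 0 ≤ 2 * αo / ((R ^ 2) ^ n - 1) := div_nonneg (by linarith) (by linarith)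
  linarith

lemma Aseq_sub_le (hR : 1 < R) (hαo : 0 ≤ αo) {n : ℤ} (hn : 0 < n) :
    Aseq αi αo R n - (αi + αo) ≤ 2 * αo * R ^ 2 / (R ^ 2 - 1) * ((R ^ 2) ^ n)⁻¹ := by
  have hρ : 1 < R ^ 2 := one_lt_pow₀ hR two_ne_zero
  have hx : R ^ 2 ≤ (R ^ 2) ^ n := by
    simpa using zpow_le_zpow_right₀ hρ.le (show (1 : ℤ) ≤ n from hn)
  have hx1 : 1 < (R ^ 2) ^ n := hρ.trans_le hx
  rw [Aseq_sub_of_pos αi hR hn]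
  field_simp [(sub_pos.mpr hρ).ne', (sub_pos.mpr hx1).ne']
  rw [div_le_div_iff₀ (by linarith) (by linarith)]
  nlinarith [mul_nonneg hαo (sub_nonneg.mpr hx)]

end Aseq

section Museq

variable (σ γi γo : ℝ)

lemma museq_of_nonneg {n : ℤ} (hn : 0 ≤ n) :
    museq σ γi γo n = (σ - 2 * (γo - γi)) * n - σ * (n : ℝ) ^ 3 := by
  rw [museq, abs_of_nonneg (Int.cast_nonneg_iff.mpr hn)]
  ring

lemma museq_isBigO : museq σ γi γo =O[atTop] fun n : ℤ => (n : ℝ) ^ 3 := by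
  refine ((((isBigO_intCast_pow_pow_of_le (by norm_num : 1 ≤ 3)).const_mul_left
    (σ - 2 * (γo - γi))).sub ((isBigO_intCast_pow_pow_of_le le_rfl).const_mul_left σ))).congr'
    ?_ EventuallyEq.rfl
  filter_upwards [eventually_ge_atTop 0] with n hn
  rw [museq_of_nonneg σ γi γo hn, pow_one]

lemma museq_sub_isBigO :
    (fun n => museq σ γi γo (n + 1) - museq σ γi γo n) =O[atTop] fun n : ℤ => (n : ℝ) ^ 2 := by
  refine ((((isBigO_intCast_pow_pow_of_le (by norm_num : 0 ≤ 2)).const_mul_left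
    (-2 * (γo - γi))).sub ((isBigO_intCast_pow_pow_of_le (by norm_num : 1 ≤ 2)).const_mul_left
    (3 * σ))).sub ((isBigO_intCast_pow_pow_of_le le_rfl).const_mul_left (3 * σ))).congr' ?_
    EventuallyEq.rfl
  filter_upwards [eventually_ge_atTop 0] with n hn
  rw [museq_of_nonneg σ γi γo hn, museq_of_nonneg σ γi γo (by omega)]
  push_cast
  ring

lemma museq_second_diff_isBigO :
    (fun n => museq σ γi γo (n + 2) - 2 * museq σ γi γo (n + 1) + museq σ γi γo n)
      =O[atTop] fun n : ℤ => (n : ℝ) ^ 1 := by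
  refine (((isBigO_intCast_pow_pow_of_le (by norm_num : 0 ≤ 1)).const_mul_left (-6 * σ)).sub
    ((isBigO_intCast_pow_pow_of_le le_rfl).const_mul_left (6 * σ))).congr' ?_ EventuallyEq.rfl
  filter_upwards [eventually_ge_atTop 0] with n hn
  rw [museq_of_nonneg σ γi γo hn, museq_of_nonneg σ γi γo (by omega),
    museq_of_nonneg σ γi γo (by omega)]
  push_cast
  ring

lemma museq_mul_inv_zpow_isBigO_one {ρ : ℝ} (hρ : 1 < ρ) :
    (fun n : ℤ => museq σ γi γo n * (ρ ^ n)⁻¹) =O[atTop] fun _ => (1 : ℝ) := by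
  have hρn (n : ℤ) : ρ ^ n * (ρ ^ n)⁻¹ = 1 := mul_inv_cancel₀ (zpow_ne_zero n (by linarith))
  exact (((museq_isBigO σ γi γo).trans (isBigO_intCast_pow_zpow hρ 3)).mul
    (isBigO_refl (fun n : ℤ => (ρ ^ n)⁻¹) atTop)).congr_right hρn

end Museq

section Growth

noncomputable def qslope (αi αo βi βo : ℝ) : ℂ :=
  (((αi + αo : ℝ) : ℂ) - I * ((βo - βi : ℝ) : ℂ))⁻¹

variable {αi αo R : ℝ} (βi βo σ γi γo : ℝ)

lemma norm_qseq_sub_qslope_mul_le (hαi : 0 < αi) (hαo : 0 < αo) (hR : 1 < R) {n : ℤ}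
    (hn : 0 < n) :
    ‖qseq αi αo βi βo R σ γi γo n - qslope αi αo βi βo * museq σ γi γo n‖ ≤
      2 * αo * R ^ 2 / (R ^ 2 - 1) / (αi + αo) ^ 2 * |museq σ γi γo n * ((R ^ 2) ^ n)⁻¹| := by
  have hm : 0 < αi + αo := by linarith
  have hA := add_le_Aseq αi hR hαo.le hn
  have hinv := norm_inv_sub_inv_le hm (z := (Aseq αi αo R n : ℂ) - I * (βo - βi : ℝ))
    (w := ((αi + αo : ℝ) : ℂ) - I * ((βo - βi : ℝ) : ℂ)) (by simpa using hA) (by simp)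
  rw [sub_sub_sub_cancel_right, ← ofReal_sub, norm_real, Real.norm_eq_abs, abs_sub_comm,
    abs_of_nonneg (sub_nonneg.mpr hA)] at hinv
  have hdecay := Aseq_sub_le αi hR hαo.le hn
  rw [qseq_eq_div hn, div_eq_mul_inv, qslope, mul_comm _ ((museq σ γi γo n : ℝ) : ℂ), ← mul_sub,
    norm_mul, norm_real, Real.norm_eq_abs, abs_mul, abs_inv,
    abs_of_pos (by positivity : (0 : ℝ) < (R ^ 2) ^ n)]
  calc |museq σ γi γo n| * ‖_‖
      ≤ |museq σ γi γo n| * ((2 * αo * R ^ 2 / (R ^ 2 - 1) * ((R ^ 2) ^ n)⁻¹) / (αi + αo) ^ 2) := by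
        gcongr
        exact hinv.trans (by gcongr)
    _ = _ := by ring

lemma qseq_sub_qslope_mul_isBigO_one (hαi : 0 < αi) (hαo : 0 < αo) (hR : 1 < R) :
    (fun n => qseq αi αo βi βo R σ γi γo n - qslope αi αo βi βo * museq σ γi γo n)
      =O[atTop] fun _ => (1 : ℝ) := by
  refine IsBigO.trans ?_ (museq_mul_inv_zpow_isBigO_one σ γi γo (one_lt_pow₀ hR two_ne_zero))
  refine IsBigO.of_bound (2 * αo * R ^ 2 / (R ^ 2 - 1) / (αi + αo) ^ 2) ?_
  filter_upwards [eventually_gt_atTop 0] with n hn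
  simpa only [Real.norm_eq_abs] using norm_qseq_sub_qslope_mul_le βi βo σ γi γo hαi hαo hR hn

lemma qseq_isBigO (hαi : 0 < αi) (hαo : 0 < αo) (hR : 1 < R) :
    qseq αi αo βi βo R σ γi γo =O[atTop] fun n : ℤ => (n : ℝ) ^ 3 :=
  isBigO_of_sub_const_mul_isBigO_one (qseq_sub_qslope_mul_isBigO_one βi βo σ γi γo hαi hαo hR)
    (museq_isBigO σ γi γo) (isBigO_one_intCast_pow 3)

lemma qseq_sub_isBigO (hαi : 0 < αi) (hαo : 0 < αo) (hR : 1 < R) :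
    (fun n => qseq αi αo βi βo R σ γi γo (n + 1) - qseq αi αo βi βo R σ γi γo n)
      =O[atTop] fun n : ℤ => (n : ℝ) ^ 2 := by
  have hr := qseq_sub_qslope_mul_isBigO_one βi βo σ γi γo hαi hαo hR
  refine isBigO_of_sub_const_mul_isBigO_one (c := qslope αi αo βi βo) ?_
    (museq_sub_isBigO σ γi γo) (isBigO_one_intCast_pow 2)
  refine ((hr.comp_tendsto (tendsto_atTop_add_const_right _ 1 tendsto_id)).sub hr).congr_left
    fun n => ?_
  simp only [Function.comp_apply, id_eq, ofReal_sub]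
  ring

lemma qseq_second_diff_isBigO (hαi : 0 < αi) (hαo : 0 < αo) (hR : 1 < R) :
    (fun n => qseq αi αo βi βo R σ γi γo (n + 2) - 2 * qseq αi αo βi βo R σ γi γo (n + 1)
      + qseq αi αo βi βo R σ γi γo n) =O[atTop] fun n : ℤ => (n : ℝ) ^ 1 := by
  have hr := qseq_sub_qslope_mul_isBigO_one βi βo σ γi γo hαi hαo hR
  refine isBigO_of_sub_const_mul_isBigO_one (c := qslope αi αo βi βo) ?_
    (museq_second_diff_isBigO σ γi γo) (isBigO_one_intCast_pow 1)
  refine (((hr.comp_tendsto (tendsto_atTop_add_const_right _ 2 tendsto_id)).sub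
    ((hr.comp_tendsto (tendsto_atTop_add_const_right _ 1 tendsto_id)).const_mul_left 2)).add
    hr).congr_left fun n => ?_
  simp only [Function.comp_apply, id_eq, ofReal_sub, ofReal_add, ofReal_mul, ofReal_ofNat]
  ring

end Growth

theorem statement14_general (αi αo βi βo R σ γi γo : ℝ)
    (hαi : 0 < αi) (hαo : 0 < αo) (hR : 2 ≤ R) :
    (∃ C : ℝ, ∀ n : ℤ, n ≠ 0 →
      ‖qseq0 αi αo βi βo R σ γi γo (n + 1) - qseq0 αi αo βi βo R σ γi γo n‖
        / (n : ℝ) ^ 2 ≤ C)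
    ∧ ∃ C : ℝ, ∀ n : ℤ, n ≠ 0 →
      ‖qseq0 αi αo βi βo R σ γi γo n *
          (qseq0 αi αo βi βo R σ γi γo (n + 1) - qseq0 αi αo βi βo R σ γi γo (n + 2))
        + qseq0 αi αo βi βo R σ γi γo (n + 2) *
          (qseq0 αi αo βi βo R σ γi γo (n + 1) - qseq0 αi αo βi βo R σ γi γo n)‖
        / (n : ℝ) ^ 4 ≤ C := by
  have hR₁ : 1 < R := by linarith
  have hsymm := qseq_neg (R := R) (by positivity) αi αo βi βo σ γi γo
  have hdiff := qseq_sub_isBigO βi βo σ γi γo hαi hαo hR₁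
  have hcross := isBigO_mul_sub_add_mul_sub (qseq_isBigO βi βo σ γi γo hαi hαo hR₁) hdiff
    (qseq_second_diff_isBigO βi βo σ γi γo hαi hαo hR₁)
  rw [qseq0_eq_qseq]
  exact ⟨exists_norm_div_pow_le_of_isBigO_cofinite <|
      isBigO_cofinite_of_norm_comp_neg_sub 1 hdiff (norm_sub_comp_neg_sub_one hsymm),
    exists_norm_div_pow_le_of_isBigO_cofinite <| isBigO_cofinite_of_norm_comp_neg_sub 2 hcross
      (norm_mul_sub_add_mul_sub_comp_neg_sub_two hsymm)⟩

/-- Setting `q_0 := 0`, the sequence `(q_n)` satisfies the difference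
estimates `sup_{n ≠ 0} |q_{n+1} − q_n|/n² < ∞` and
`sup_{n ≠ 0} |q_n·(q_{n+1} − q_{n+2}) + q_{n+2}·(q_{n+1} − q_n)|/n⁴ < ∞`. -/
theorem statement14 (αi αo βi βo R σ γi γo : ℝ)
    (hαi : 0 < αi) (hαo : 0 < αo) (hβi : 0 ≤ βi) (hβo : 0 ≤ βo) (hR : 2 ≤ R)
    (hσ : 0 < σ) :
    (∃ C : ℝ, ∀ n : ℤ, n ≠ 0 →
      ‖qseq0 αi αo βi βo R σ γi γo (n + 1) - qseq0 αi αo βi βo R σ γi γo n‖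
        / (n : ℝ) ^ 2 ≤ C)
    ∧ ∃ C : ℝ, ∀ n : ℤ, n ≠ 0 →
      ‖qseq0 αi αo βi βo R σ γi γo n *
          (qseq0 αi αo βi βo R σ γi γo (n + 1) - qseq0 αi αo βi βo R σ γi γo (n + 2))
        + qseq0 αi αo βi βo R σ γi γo (n + 2) *
          (qseq0 αi αo βi βo R σ γi γo (n + 1) - qseq0 αi αo βi βo R σ γi γo n)‖
        / (n : ℝ) ^ 4 ≤ C :=
  statement14_general αi αo βi βo R σ γi γo hαi hαo hR
end

section
/- Assume γ_i > γ_o. Then Re q_1 > 0 and Re q_{−1} > 0, and moreover the infimum inf { Re q_n : n ∈ ℤ \ {0}, Re q_n > 0 } is strictly positive; in particular the linearization at the trivial solution has at least one eigenvalue with positive real part, bounded away from the imaginary axis. -/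
open Complex Filter

/-! Since `A_n > 0` for every `n ≠ 0`, the sign of `Re q_n = A_n μ(n) / (A_n² + B²)` is the sign
of `μ(n)`. Now `μ(±1) = 2(γ_i − γ_o) > 0`, while `σ > 0` makes `μ(n) < 0` for all large `|n|`.
So the positive values of `Re q_n` form a finite nonempty set of positive reals, whose infimum is
one of them. -/

lemma re_ofReal_add_I_mul_div_ofReal_mul_ofReal (a b d m : ℝ) :
    (((a : ℂ) + I * b) / d * m).re = a / d * m := by
  simp [Complex.div_ofReal_re]

lemma Aseq_pos {αi αo R : ℝ} (hαi : 0 ≤ αi) (hαo : 0 < αo) (hR : 1 < R) {n : ℤ} (hn : n ≠ 0) :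
    0 < Aseq αi αo R n := by
  rcases hn.lt_or_gt with hneg | hpos
  · have hpow : R ^ (2 * n) < 1 := zpow_lt_one_of_neg₀ hR (by omega)
    have hpow_pos : 0 < R ^ (2 * n) := zpow_pos (by linarith) _
    have hfrac : (R ^ (2 * n) + 1) / (R ^ (2 * n) - 1) < 0 :=
      div_neg_of_pos_of_neg (by linarith) (by linarith)
    rw [Aseq, Int.sign_eq_neg_one_of_neg hneg]
    push_cast
    nlinarith
  · have hpow : 1 < R ^ (2 * n) := one_lt_zpow₀ hR (by omega)
    have hfrac : 0 < (R ^ (2 * n) + 1) / (R ^ (2 * n) - 1) :=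
      div_pos (by linarith) (by linarith)
    rw [Aseq, Int.sign_eq_one_of_pos hpos]
    push_cast
    nlinarith

lemma qseq_re_pos_iff {αi αo R : ℝ} (βi βo σ γi γo : ℝ) (hαi : 0 ≤ αi) (hαo : 0 < αo)
    (hR : 1 < R) {n : ℤ} (hn : n ≠ 0) :
    0 < (qseq αi αo βi βo R σ γi γo n).re ↔ 0 < museq σ γi γo n := by
  have hA := Aseq_pos hαi hαo hR hn
  rw [qseq_re]
  exact mul_pos_iff_of_pos_left (by positivity)

lemma museq_one (σ γi γo : ℝ) : museq σ γi γo 1 = 2 * (γi - γo) := by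
  simp [museq]
  ring

lemma museq_neg_one (σ γi γo : ℝ) : museq σ γi γo (-1) = 2 * (γi - γo) := by
  simp [museq]
  ring

lemma finite_setOf_museq_pos {σ : ℝ} (γi γo : ℝ) (hσ : 0 < σ) :
    {n : ℤ | 0 < museq σ γi γo n}.Finite := by
  set m : ℤ := ⌈1 + 2 * (γi - γo) / σ⌉
  refine (Set.finite_Icc (-m) m).subset fun n hμ => ?_
  have hfactor : 0 < σ - 2 * (γo - γi) - σ * (n : ℝ) ^ 2 :=
    pos_of_mul_pos_right hμ (by positivity)
  have hsq : (n : ℝ) ^ 2 < 1 + 2 * (γi - γo) / σ := by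
    rw [add_div' _ _ _ hσ.ne', lt_div_iff₀ hσ]
    linarith
  have hsq_le : n ^ 2 ≤ m := by exact_mod_cast hsq.le.trans (Int.le_ceil _)
  have habs : |n| ≤ n ^ 2 := by
    rw [← Int.natCast_natAbs]
    exact Int.natAbs_le_self_sq n
  exact abs_le.mp (habs.trans hsq_le)

theorem statement19_general (αi αo βi βo R σ γi γo : ℝ)
    (hαi : 0 < αi) (hαo : 0 < αo) (hR : 2 ≤ R)
    (hσ : 0 < σ) (hγ : γo < γi) :
    0 < (qseq αi αo βi βo R σ γi γo 1).re
    ∧ 0 < (qseq αi αo βi βo R σ γi γo (-1)).re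
    ∧ 0 < sInf {x : ℝ | ∃ n : ℤ, n ≠ 0 ∧
        x = (qseq αi αo βi βo R σ γi γo n).re ∧ 0 < x} := by
  have hR1 : 1 < R := by linarith
  have hpos_iff {n : ℤ} (hn : n ≠ 0) :=
    qseq_re_pos_iff βi βo σ γi γo hαi.le hαo hR1 hn
  have hq1 : 0 < (qseq αi αo βi βo R σ γi γo 1).re :=
    (hpos_iff one_ne_zero).mpr (by rw [museq_one]; linarith)
  have hq_neg1 : 0 < (qseq αi αo βi βo R σ γi γo (-1)).re :=
    (hpos_iff (by norm_num)).mpr (by rw [museq_neg_one]; linarith)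
  refine ⟨hq1, hq_neg1, ?_⟩
  have hfin : {x : ℝ | ∃ n : ℤ, n ≠ 0 ∧
      x = (qseq αi αo βi βo R σ γi γo n).re ∧ 0 < x}.Finite := by
    refine ((finite_setOf_museq_pos γi γo hσ).image
      fun n => (qseq αi αo βi βo R σ γi γo n).re).subset ?_
    rintro x ⟨n, hn, rfl, hx⟩
    exact ⟨n, (hpos_iff hn).mp hx, rfl⟩
  rw [hfin.lt_csInf_iff ⟨_, 1, one_ne_zero, rfl, hq1⟩]
  rintro x ⟨-, -, -, hx⟩
  exact hx

/-- unstable case, `ϱ_i > ϱ_o`, i.e. `γ_i > γ_o`: `Re q_1 > 0` and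
`Re q_{−1} > 0`, and the infimum `inf {Re q_n : n ≠ 0, Re q_n > 0}` is strictly
positive; so the linearization has an eigenvalue with positive real part, bounded
away from the imaginary axis. -/
theorem statement19 (αi αo βi βo R σ γi γo : ℝ)
    (hαi : 0 < αi) (hαo : 0 < αo) (hβi : 0 ≤ βi) (hβo : 0 ≤ βo) (hR : 2 ≤ R)
    (hσ : 0 < σ) (hγ : γo < γi) :
    0 < (qseq αi αo βi βo R σ γi γo 1).re
    ∧ 0 < (qseq αi αo βi βo R σ γi γo (-1)).re
    ∧ 0 < sInf {x : ℝ | ∃ n : ℤ, n ≠ 0 ∧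
        x = (qseq αi αo βi βo R σ γi γo n).re ∧ 0 < x} :=
  statement19_general αi αo βi βo R σ γi γo hαi hαo hR hσ hγ
end
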